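/- Let (S, 𝓕, τ) be a probabilistic metric space whose triangle function τ is continuous. Then the strong neighborhood system satisfies: (1) if V is a strong neighborhood of p ∈ S and q ∈ V, then there is a strong neighborhood W of q such that W ⊆ V; and (2) if p ≠ q, then there exist a strong neighborhood V of p and a strong neighborhood W of q such that V ∩ W = ∅. Consequently the strong neighborhood system determines a Hausdorff topology on S. -/

import Mathlib

open Set Filter Topology

/-- A distance distribution function: nondecreasing, left-continuous,
with values in `[0,1]`, and vanishing on `(-∞, 0]`. -/
def IsDDF (F : ℝ → ℝ) : Prop :=
  Monotone F ∧ (∀ x : ℝ, ContinuousWithinAt F (Set.Iio x) x) ∧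
    (∀ x, 0 ≤ F x ∧ F x ≤ 1) ∧ ∀ x ≤ 0, F x = 0

/-- The condition `(F, G; h)` in the definition of the modified Lévy distance. -/
def LevyCond (F G : ℝ → ℝ) (h : ℝ) : Prop :=
  ∀ x ∈ Set.Ioo (-(1 / h)) (1 / h), F (x - h) - h ≤ G x ∧ G x ≤ F (x + h) + h

/-- The modified Lévy distance on `Δ⁺`. -/
noncomputable def dL (F G : ℝ → ℝ) : ℝ :=
  sInf {h : ℝ | h ∈ Set.Ioc (0 : ℝ) 1 ∧ LevyCond F G h ∧ LevyCond G F h}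

/-- The distribution function `H₀`, equal to `0` on `(-∞, 0]` and `1` on `(0, ∞)`. -/
noncomputable def H0 : ℝ → ℝ := fun x => if x ≤ 0 then 0 else 1

/-- A triangle function: a binary operation on `Δ⁺` that is commutative, associative,
nondecreasing in each argument, and has `H₀` as identity. -/
def IsTriangleFunction (τ : (ℝ → ℝ) → (ℝ → ℝ) → (ℝ → ℝ)) : Prop :=
  (∀ F G, IsDDF F → IsDDF G → IsDDF (τ F G)) ∧
  (∀ F G, IsDDF F → IsDDF G → τ F G = τ G F) ∧
  (∀ F G K, IsDDF F → IsDDF G → IsDDF K → τ (τ F G) K = τ F (τ G K)) ∧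
  (∀ F G K, IsDDF F → IsDDF G → IsDDF K → F ≤ G → τ F K ≤ τ G K) ∧
  (∀ F, IsDDF F → τ H0 F = F)

/-- Continuity of a triangle function with respect to the modified Lévy metric on `Δ⁺`
(sequential continuity, which is equivalent since `d_L` is a metric). -/
def ContinuousTF (τ : (ℝ → ℝ) → (ℝ → ℝ) → (ℝ → ℝ)) : Prop :=
  ∀ (F G : ℕ → ℝ → ℝ) (F₀ G₀ : ℝ → ℝ),
    (∀ n, IsDDF (F n)) → (∀ n, IsDDF (G n)) → IsDDF F₀ → IsDDF G₀ →
    Filter.Tendsto (fun n => dL (F n) F₀) Filter.atTop (nhds 0) →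
    Filter.Tendsto (fun n => dL (G n) G₀) Filter.atTop (nhds 0) →
    Filter.Tendsto (fun n => dL (τ (F n) (G n)) (τ F₀ G₀)) Filter.atTop (nhds 0)

/-- `(S, 𝓕, τ)` is a probabilistic metric space. -/
structure IsPMSpace {S : Type*} (𝓕 : S → S → ℝ → ℝ)
    (τ : (ℝ → ℝ) → (ℝ → ℝ) → (ℝ → ℝ)) : Prop where
  ddf : ∀ p q, IsDDF (𝓕 p q)
  tf : IsTriangleFunction τ
  refl : ∀ p, 𝓕 p p = H0
  ne : ∀ p q, p ≠ q → 𝓕 p q ≠ H0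
  symm : ∀ p q, 𝓕 p q = 𝓕 q p
  tri : ∀ p q r, τ (𝓕 p q) (𝓕 q r) ≤ 𝓕 p r

/-- The strong neighborhood `N_p(t) = {q : F_{p,q}(t) > 1 - t}`. -/
def Npt {S : Type*} (𝓕 : S → S → ℝ → ℝ) (p : S) (t : ℝ) : Set S :=
  {q | 1 - t < 𝓕 p q t}

/-- A set is open in the strong topology iff it contains a strong neighborhood
of each of its points. -/
def StrongOpen {S : Type*} (𝓕 : S → S → ℝ → ℝ) (U : Set S) : Prop :=
  ∀ p ∈ U, ∃ t > 0, Npt 𝓕 p t ⊆ U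

/- The closeness of two d.d.f.'s in the Lévy metric and the strong neighbourhoods are two
views of the same thing: `q ∈ N_p(t)` gives `d_L(F_{p,q}, H₀) ≤ t`, and `d_L(F, G) < h` gives
the pointwise bound `F (x - h) - h ≤ G x` on the window `h x < 1`. With that dictionary, (1)
is the continuity of `τ` at `(F_{p,q}, H₀)`, where `τ(F_{p,q}, H₀) = F_{p,q}`: for `r` close to
`q`, `τ(F_{p,q}, F_{q,r})` is close to `F_{p,q}`, and left-continuity of `F_{p,q}` at `t` leaves
room for the error. For (2), pick `t` with `F_{p,q}(t) ≤ 1 - t`; a common point `r` of small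
neighbourhoods of `p` and `q` would make `τ(F_{p,r}, F_{r,q}) ≤ F_{p,q}` close to
`τ(H₀, H₀) = H₀`, forcing `F_{p,q}(t) > 1 - t`. -/

namespace IsDDF

variable {F : ℝ → ℝ}

lemma nonneg (hF : IsDDF F) (x : ℝ) : 0 ≤ F x := (hF.2.2.1 x).1

lemma le_one (hF : IsDDF F) (x : ℝ) : F x ≤ 1 := (hF.2.2.1 x).2

lemma eq_zero_of_nonpos (hF : IsDDF F) {x : ℝ} (hx : x ≤ 0) : F x = 0 := hF.2.2.2 x hx

lemma exists_lt_sub_sub (hF : IsDDF F) {t : ℝ} (hFt : 1 - t < F t) :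
    ∃ δ > 0, δ * t < 1 ∧ 1 - t < F (t - δ) - δ := by
  have hshift : Tendsto (fun y => t - y) (𝓝[>] 0) (𝓝[<] t) := by
    refine tendsto_nhdsWithin_of_tendsto_nhds_of_eventually_within _ ?_ ?_
    · exact ((continuous_const.sub continuous_id).tendsto' 0 t (sub_zero t)).mono_left
        nhdsWithin_le_nhds
    · filter_upwards [self_mem_nhdsWithin] with y (hy : 0 < y)
      simpa using hy
  have hlim : Tendsto (fun y => F (t - y) - y) (𝓝[>] 0) (𝓝 (F t)) := by
    simpa using ((hF.2.1 t).tendsto.comp hshift).sub (tendsto_id.mono_left nhdsWithin_le_nhds)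
  have hsmall : Tendsto (fun y => y * t) (𝓝[>] 0) (𝓝 0) := by
    simpa using (tendsto_id.mul_const t).mono_left (nhdsWithin_le_nhds (a := (0 : ℝ)))
  obtain ⟨δ, hδ, hδt, hδF⟩ := (eventually_mem_nhdsWithin.and
    ((hsmall.eventually (gt_mem_nhds one_pos)).and (hlim.eventually (lt_mem_nhds hFt)))).exists
  exact ⟨δ, hδ, hδt, hδF⟩

end IsDDF

lemma H0_of_pos {x : ℝ} (hx : 0 < x) : H0 x = 1 := if_neg hx.not_ge

lemma isDDF_H0 : IsDDF H0 := by
  refine ⟨fun a b hab => ?_, fun x => ?_, fun x => ?_, fun x hx => if_pos hx⟩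
  · simp only [H0]
    split_ifs <;> linarith
  · rcases le_or_gt x 0 with hx | hx
    · refine continuousWithinAt_const.congr (fun y (hy : y < x) => ?_) (if_pos hx)
      exact if_pos (hy.le.trans hx)
    · have hone : H0 =ᶠ[𝓝 x] fun _ => 1 := by
        filter_upwards [Ioi_mem_nhds hx] with y (hy : 0 < y)
        exact H0_of_pos hy
      exact (continuousAt_const.congr hone.symm).continuousWithinAt
  · unfold H0
    split_ifs <;> norm_num

section Levy

variable {F G : ℝ → ℝ}

lemma levyCond_one (hF : IsDDF F) (hG : IsDDF G) : LevyCond F G 1 := fun x _ =>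
  ⟨by linarith [hF.le_one (x - 1), hG.nonneg x], by linarith [hG.le_one x, hF.nonneg (x + 1)]⟩

lemma levyCond_self (hF : Monotone F) {h : ℝ} (h0 : 0 ≤ h) : LevyCond F F h := fun x _ =>
  ⟨by linarith [hF (show x - h ≤ x by linarith)], by linarith [hF (show x ≤ x + h by linarith)]⟩

lemma dL_le_of_levyCond {h : ℝ} (hh : h ∈ Ioc 0 1) (hFG : LevyCond F G h)
    (hGF : LevyCond G F h) : dL F G ≤ h :=
  csInf_le (by exact ⟨0, fun _ hk => hk.1.1.le⟩) ⟨hh, hFG, hGF⟩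

lemma dL_nonneg (F G : ℝ → ℝ) : 0 ≤ dL F G :=
  Real.sInf_nonneg fun _ hh => hh.1.1.le

lemma dL_le_one (hF : IsDDF F) (hG : IsDDF G) : dL F G ≤ 1 :=
  dL_le_of_levyCond ⟨one_pos, le_rfl⟩ (levyCond_one hF hG) (levyCond_one hG hF)

lemma dL_comm (F G : ℝ → ℝ) : dL F G = dL G F := by
  simp only [dL, and_comm (a := LevyCond F G _)]

lemma dL_self (hF : Monotone F) : dL F F = 0 := by
  have hset : {h : ℝ | h ∈ Ioc 0 1 ∧ LevyCond F F h ∧ LevyCond F F h} = Ioc 0 1 :=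
    Set.ext fun h => ⟨fun hh => hh.1, fun hh =>
      ⟨hh, levyCond_self hF hh.1.le, levyCond_self hF hh.1.le⟩⟩
  rw [dL, hset, csInf_Ioc zero_lt_one]

lemma sub_le_of_dL_lt (hF : IsDDF F) (hG : IsDDF G) {x h : ℝ} (hx : 0 < x) (hxh : h * x < 1)
    (hlt : dL F G < h) : F (x - h) - h ≤ G x := by
  obtain ⟨h', ⟨⟨h'0, -⟩, hFG, -⟩, hh'⟩ := exists_lt_of_csInf_lt
    (by exact ⟨1, ⟨one_pos, le_rfl⟩, levyCond_one hF hG, levyCond_one hG hF⟩) hlt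
  have hwindow : x ∈ Ioo (-(1 / h')) (1 / h') := by
    refine ⟨by linarith [one_div_pos.mpr h'0], ?_⟩
    rw [lt_div_iff₀ h'0]
    nlinarith
  linarith [(hFG x hwindow).1, hF.1 (show x - h ≤ x - h' by linarith)]

lemma dL_H0_le_of_sub_le (hF : IsDDF F) {h : ℝ} (h0 : 0 < h) (hFh : 1 - h ≤ F h) :
    dL F H0 ≤ h := by
  rcases lt_or_ge 1 h with h1 | h1
  · exact (dL_le_one hF isDDF_H0).trans h1.le
  have below : ∀ y, F y ≤ H0 (y + h) + h := fun y => by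
    rcases le_or_gt (y + h) 0 with hy | hy
    · rw [hF.eq_zero_of_nonpos (by linarith)]
      exact add_nonneg (isDDF_H0.nonneg _) h0.le
    · linarith [H0_of_pos hy, hF.le_one y]
  have above : ∀ y, H0 y ≤ F (y + h) + h := fun y => by
    rcases le_or_gt y 0 with hy | hy
    · linarith [isDDF_H0.eq_zero_of_nonpos hy, hF.nonneg (y + h)]
    · linarith [H0_of_pos hy, hF.1 (show h ≤ y + h by linarith)]
  refine dL_le_of_levyCond ⟨h0, h1⟩ (fun x _ => ⟨?_, above x⟩) (fun x _ => ⟨?_, ?_⟩)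
  · have := below (x - h)
    rw [sub_add_cancel] at this
    linarith
  · have := above (x - h)
    rw [sub_add_cancel] at this
    linarith
  · exact below x

end Levy

lemma ContinuousTF.exists_dL_lt {τ : (ℝ → ℝ) → (ℝ → ℝ) → (ℝ → ℝ)} (hτ : ContinuousTF τ)
    {F₀ G₀ : ℝ → ℝ} (hF₀ : IsDDF F₀) (hG₀ : IsDDF G₀) {δ : ℝ} (hδ : 0 < δ) :
    ∃ η > 0, ∀ F G, IsDDF F → IsDDF G → dL F F₀ ≤ η → dL G G₀ ≤ η →
      dL (τ F G) (τ F₀ G₀) < δ := by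
  by_contra! hcon
  choose F G hF hG hFF₀ hGG₀ hfar using fun n : ℕ => hcon (1 / (n + 1)) Nat.one_div_pos_of_nat
  have hF_lim := squeeze_zero (fun n => dL_nonneg _ _) hFF₀ tendsto_one_div_add_atTop_nhds_zero_nat
  have hG_lim := squeeze_zero (fun n => dL_nonneg _ _) hGG₀ tendsto_one_div_add_atTop_nhds_zero_nat
  obtain ⟨n, hn⟩ :=
    ((hτ F G F₀ G₀ hF hG hF₀ hG₀ hF_lim hG_lim).eventually (gt_mem_nhds hδ)).exists
  exact (hfar n).not_gt hn

namespace IsPMSpace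

variable {S : Type*} {𝓕 : S → S → ℝ → ℝ} {τ : (ℝ → ℝ) → (ℝ → ℝ) → (ℝ → ℝ)}

lemma mem_Npt_self (hPM : IsPMSpace 𝓕 τ) (p : S) {t : ℝ} (ht : 0 < t) : p ∈ Npt 𝓕 p t := by
  change 1 - t < 𝓕 p p t
  rw [hPM.refl, H0_of_pos ht]
  linarith

lemma dL_H0_le_of_mem_Npt (hPM : IsPMSpace 𝓕 τ) {p q : S} {t : ℝ} (ht : 0 < t)
    (hq : q ∈ Npt 𝓕 p t) : dL (𝓕 p q) H0 ≤ t :=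
  dL_H0_le_of_sub_le (hPM.ddf p q) ht (le_of_lt hq)

lemma tau_H0_right (hPM : IsPMSpace 𝓕 τ) {F : ℝ → ℝ} (hF : IsDDF F) : τ F H0 = F := by
  rw [hPM.tf.2.1 F H0 hF isDDF_H0, hPM.tf.2.2.2.2 F hF]

lemma exists_sub_le_tau (hPM : IsPMSpace 𝓕 τ) (hτ : ContinuousTF τ) {F₀ : ℝ → ℝ}
    (hF₀ : IsDDF F₀) {x δ : ℝ} (hx : 0 < x) (hδ : 0 < δ) (hδx : δ * x < 1) :
    ∃ s > 0, ∀ G, IsDDF G → dL G F₀ ≤ s → ∀ q r, r ∈ Npt 𝓕 q s →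
      F₀ (x - δ) - δ ≤ τ G (𝓕 q r) x := by
  obtain ⟨s, hs, hclose⟩ := hτ.exists_dL_lt hF₀ isDDF_H0 hδ
  refine ⟨s, hs, fun G hG hGF₀ q r hr => ?_⟩
  have hτG := hclose G (𝓕 q r) hG (hPM.ddf q r) hGF₀ (hPM.dL_H0_le_of_mem_Npt hs hr)
  rw [hPM.tau_H0_right hF₀, dL_comm] at hτG
  exact sub_le_of_dL_lt hF₀ (hPM.tf.1 _ _ hG (hPM.ddf q r)) hx hδx hτG

lemma exists_Npt_subset (hPM : IsPMSpace 𝓕 τ) (hτ : ContinuousTF τ) {p q : S} {t : ℝ}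
    (ht : 0 < t) (hq : q ∈ Npt 𝓕 p t) : ∃ s > 0, Npt 𝓕 q s ⊆ Npt 𝓕 p t := by
  obtain ⟨δ, hδ, hδt, hmargin⟩ := (hPM.ddf p q).exists_lt_sub_sub hq
  obtain ⟨s, hs, hbound⟩ := hPM.exists_sub_le_tau hτ (hPM.ddf p q) ht hδ hδt
  refine ⟨s, hs, fun r hr => ?_⟩
  calc 1 - t < 𝓕 p q (t - δ) - δ := hmargin
    _ ≤ τ (𝓕 p q) (𝓕 q r) t :=
      hbound _ (hPM.ddf p q) (by rw [dL_self (hPM.ddf p q).1]; exact hs.le) q r hr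
    _ ≤ 𝓕 p r t := hPM.tri p q r t

lemma strongOpen_Npt (hPM : IsPMSpace 𝓕 τ) (hτ : ContinuousTF τ) (p : S) {t : ℝ}
    (ht : 0 < t) : StrongOpen 𝓕 (Npt 𝓕 p t) :=
  fun _ hq => hPM.exists_Npt_subset hτ ht hq

lemma exists_notMem_Npt (hPM : IsPMSpace 𝓕 τ) {p q : S} (hpq : p ≠ q) :
    ∃ t > 0, t ≤ 1 ∧ q ∉ Npt 𝓕 p t := by
  obtain ⟨x, hx⟩ : ∃ x, 𝓕 p q x ≠ H0 x := by
    by_contra! h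
    exact hPM.ne p q hpq (funext h)
  have hx0 : 0 < x := by
    by_contra! hx0
    rw [(hPM.ddf p q).eq_zero_of_nonpos hx0, isDDF_H0.eq_zero_of_nonpos hx0] at hx
    exact hx rfl
  rw [H0_of_pos hx0] at hx
  have hlt : 𝓕 p q x < 1 := lt_of_le_of_ne ((hPM.ddf p q).le_one x) hx
  have hmin_le := min_le_right x (1 - 𝓕 p q x)
  have hFt : 𝓕 p q (min x (1 - 𝓕 p q x)) ≤ 1 - min x (1 - 𝓕 p q x) := by
    linarith [(hPM.ddf p q).1 (min_le_left x (1 - 𝓕 p q x))]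
  exact ⟨_, lt_min hx0 (by linarith), by linarith [(hPM.ddf p q).nonneg x], hFt.not_gt⟩

lemma exists_Npt_inter_Npt_eq_empty (hPM : IsPMSpace 𝓕 τ) (hτ : ContinuousTF τ) {p q : S}
    (hpq : p ≠ q) : ∃ s > 0, Npt 𝓕 p s ∩ Npt 𝓕 q s = ∅ := by
  obtain ⟨t, ht, ht1, hfar⟩ := hPM.exists_notMem_Npt hpq
  obtain ⟨s, hs, hbound⟩ :=
    hPM.exists_sub_le_tau hτ isDDF_H0 ht (half_pos ht) (by nlinarith)
  refine ⟨s, hs, eq_empty_iff_forall_notMem.mpr fun r ⟨hpr, hqr⟩ => ?_⟩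
  have hnear := hbound _ (hPM.ddf p r) (hPM.dL_H0_le_of_mem_Npt hs hpr) q r hqr
  rw [H0_of_pos (by linarith), ← hPM.symm r q] at hnear
  exact hfar (show 1 - t < 𝓕 p q t by linarith [hPM.tri p r q t])

end IsPMSpace

theorem strong_nbhd_system_hausdorff_general {S : Type*}
    (𝓕 : S → S → ℝ → ℝ) (τ : (ℝ → ℝ) → (ℝ → ℝ) → (ℝ → ℝ))
    (hPM : IsPMSpace 𝓕 τ) (hτ : ContinuousTF τ) :
    (∀ (p : S), ∀ t > (0 : ℝ), ∀ q ∈ Npt 𝓕 p t, ∃ s > (0 : ℝ), Npt 𝓕 q s ⊆ Npt 𝓕 p t) ∧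
    (∀ p q : S, p ≠ q → ∃ t > (0 : ℝ), ∃ s > (0 : ℝ), Npt 𝓕 p t ∩ Npt 𝓕 q s = ∅) ∧
    (∀ p q : S, p ≠ q → ∃ U V : Set S, StrongOpen 𝓕 U ∧ StrongOpen 𝓕 V ∧
      p ∈ U ∧ q ∈ V ∧ U ∩ V = ∅) := by
  refine ⟨fun p t ht q hq => hPM.exists_Npt_subset hτ ht hq, fun p q hpq => ?_,
    fun p q hpq => ?_⟩
  · obtain ⟨s, hs, hdisj⟩ := hPM.exists_Npt_inter_Npt_eq_empty hτ hpq
    exact ⟨s, hs, s, hs, hdisj⟩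
  · obtain ⟨s, hs, hdisj⟩ := hPM.exists_Npt_inter_Npt_eq_empty hτ hpq
    exact ⟨_, _, hPM.strongOpen_Npt hτ p hs, hPM.strongOpen_Npt hτ q hs,
      hPM.mem_Npt_self p hs, hPM.mem_Npt_self q hs, hdisj⟩

/-- In a PM space with continuous triangle function, the strong
neighborhood system satisfies: (1) every strong neighborhood of `p` contains, around any
of its points `q`, a strong neighborhood of `q`; (2) distinct points have disjoint strong
neighborhoods; consequently the strong topology is Hausdorff. -/
theorem strong_nbhd_system_hausdorff {S : Type*} [Nonempty S]
    (𝓕 : S → S → ℝ → ℝ) (τ : (ℝ → ℝ) → (ℝ → ℝ) → (ℝ → ℝ))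
    (hPM : IsPMSpace 𝓕 τ) (hτ : ContinuousTF τ) :
    (∀ (p : S), ∀ t > (0 : ℝ), ∀ q ∈ Npt 𝓕 p t, ∃ s > (0 : ℝ), Npt 𝓕 q s ⊆ Npt 𝓕 p t) ∧
    (∀ p q : S, p ≠ q → ∃ t > (0 : ℝ), ∃ s > (0 : ℝ), Npt 𝓕 p t ∩ Npt 𝓕 q s = ∅) ∧
    (∀ p q : S, p ≠ q → ∃ U V : Set S, StrongOpen 𝓕 U ∧ StrongOpen 𝓕 V ∧
      p ∈ U ∧ q ∈ V ∧ U ∩ V = ∅) :=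
  strong_nbhd_system_hausdorff_general 𝓕 τ hPM hτ
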